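/- Let (A, ∘) be an anti-pre-Lie algebra. Then the bracket [x,y] = x∘y - y∘x satisfies the Jacobi identity and skew-symmetry, so (A, [,]) is a Lie algebra. -/

import Mathlib

/-!
Summing the first anti-pre-Lie axiom `x∘(y∘z) - y∘(x∘z) = -[x,y]∘z` over the cyclic permutations
of `(x, y, z)` shows that the cyclic sum of `z∘[x,y]` is minus the cyclic sum of `[x,y]∘z`; the
second axiom says the latter vanishes, so the Jacobi sum `Σ ([x,y]∘z - z∘[x,y])` is zero.
-/

/-- An anti-pre-Lie algebra structure on a vector space `A`. -/
def IsAntiPreLie {k A : Type*} [Field k] [AddCommGroup A] [Module k A]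
    (c : A →ₗ[k] A →ₗ[k] A) : Prop :=
  (∀ x y z, c x (c y z) - c y (c x z) = c (c y x - c x y) z) ∧
  (∀ x y z, c (c x y - c y x) z + c (c y z - c z y) x + c (c z x - c x z) y = 0)

theorem cyclic_apply_commutator_eq_neg_cyclic_commutator_apply {R M : Type*} [CommRing R]
    [AddCommGroup M] [Module R M] (c : M →ₗ[R] M →ₗ[R] M)
    (h : ∀ x y z, c x (c y z) - c y (c x z) = c (c y x - c x y) z) (x y z : M) :
    c z (c x y - c y x) + c x (c y z - c z y) + c y (c z x - c x z) =
      -(c (c x y - c y x) z + c (c y z - c z y) x + c (c z x - c x z) y) := by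
  linear_combination (norm := skip) h x y z + h y z x + h z x y
  simp only [map_sub, LinearMap.sub_apply]
  abel

/-- the commutator bracket `[x,y] = x∘y - y∘x` of an anti-pre-Lie algebra is
skew-symmetric and satisfies the Jacobi identity, so it defines a Lie algebra. -/
theorem antiPreLie_commutator_lie {k A : Type*} [Field k] [AddCommGroup A] [Module k A]
    (c : A →ₗ[k] A →ₗ[k] A) (h : IsAntiPreLie c) :
    (∀ x y : A, c x y - c y x = -(c y x - c x y)) ∧
    (∀ x y z : A,
      (c (c x y - c y x) z - c z (c x y - c y x)) +
      (c (c y z - c z y) x - c x (c y z - c z y)) +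
      (c (c z x - c x z) y - c y (c z x - c x z)) = 0) := by
  obtain ⟨h_left, h_cyclic⟩ := h
  refine ⟨fun x y => (neg_sub _ _).symm, fun x y z => ?_⟩
  calc _ = (c (c x y - c y x) z + c (c y z - c z y) x + c (c z x - c x z) y) -
        (c z (c x y - c y x) + c x (c y z - c z y) + c y (c z x - c x z)) := by abel
    _ = 0 := by
      rw [cyclic_apply_commutator_eq_neg_cyclic_commutator_apply c h_left, h_cyclic,
        neg_zero, sub_zero]
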